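/- Let τ₀, τ₁ ∈ ℝⁿ have all positive entries and define componentwise γ_i(t) = τ₀ᵢ^{1-t} · τ₁ᵢ^t for t ∈ ℝ. Then γ_i(0) = τ₀ᵢ and γ_i(1) = τ₁ᵢ, γ is twice differentiable and satisfies γ_i''(t) = γ_i'(t)²/γ_i(t) for all t, and the speed is constant: ∑_{i=1}^n (γ_i'(t)/γ_i(t))² = ∑_{i=1}^n (log(τ₁ᵢ/τ₀ᵢ))² for all real t. -/

import Mathlib

/-! Each component is `τ₀ᵢ · exp (qᵢ t)` with `qᵢ = log (τ₁ᵢ / τ₀ᵢ)`, so `γᵢ' = qᵢ γᵢ`: the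
logarithmic derivative is the constant `qᵢ`, and `γᵢ'' = qᵢ² γᵢ = (γᵢ')² / γᵢ`. -/

open Real

lemma Real.rpow_one_sub_mul_rpow {a b : ℝ} (ha : 0 < a) (hb : 0 < b) (t : ℝ) :
    a ^ (1 - t) * b ^ t = a * exp (log (b / a) * t) := by
  rw [rpow_def_of_pos ha, rpow_def_of_pos hb, log_div hb.ne' ha.ne', ← exp_add,
    show log a * (1 - t) + log b * t = log a + (log b - log a) * t by ring, exp_add, exp_log ha]

lemma Real.hasDerivAt_const_mul_exp_mul (a q t : ℝ) :
    HasDerivAt (fun s => a * exp (q * s)) (q * a * exp (q * t)) t := by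
  have h := ((hasDerivAt_id t).const_mul q).exp.const_mul a
  simp only [id, mul_one] at h
  exact h.congr_deriv (by ring)

lemma Real.deriv_const_mul_exp_mul (a q : ℝ) :
    deriv (fun s => a * exp (q * s)) = fun t => q * a * exp (q * t) :=
  funext fun t => (hasDerivAt_const_mul_exp_mul a q t).deriv

lemma Real.logDeriv_const_mul_exp_mul {a : ℝ} (ha : a ≠ 0) (q t : ℝ) :
    logDeriv (fun s => a * exp (q * s)) t = q := by
  rw [logDeriv_apply, deriv_const_mul_exp_mul]
  field_simp

lemma Real.deriv_deriv_const_mul_exp_mul {a : ℝ} (ha : a ≠ 0) (q t : ℝ) :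
    deriv (deriv fun s => a * exp (q * s)) t =
      deriv (fun s => a * exp (q * s)) t ^ 2 / (a * exp (q * t)) := by
  simp only [deriv_const_mul_exp_mul]
  field_simp

/-- Endpoint form of the texture geodesic of Proposition 2: for `τ₀, τ₁ ∈ ℝⁿ` with positive
entries, the componentwise curve `γᵢ(t) = τ₀ᵢ^{1-t} τ₁ᵢ^t` joins `τ₀` to `τ₁`, is twice
differentiable, satisfies the geodesic equation `γᵢ'' = (γᵢ')²/γᵢ`, and has constant
squared speed `∑ᵢ (γᵢ'(t)/γᵢ(t))² = ∑ᵢ (log(τ₁ᵢ/τ₀ᵢ))²`. -/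
theorem texture_geodesic_endpoint_form
    {n : ℕ} (τ₀ τ₁ : Fin n → ℝ) (hτ₀ : ∀ i, 0 < τ₀ i) (hτ₁ : ∀ i, 0 < τ₁ i)
    (γ : Fin n → ℝ → ℝ)
    (hγ : γ = fun i (t : ℝ) => τ₀ i ^ (1 - t) * τ₁ i ^ t) :
    (∀ i : Fin n, γ i 0 = τ₀ i ∧ γ i 1 = τ₁ i) ∧
    (∀ i : Fin n, ∀ t : ℝ, DifferentiableAt ℝ (γ i) t ∧ DifferentiableAt ℝ (deriv (γ i)) t) ∧
    (∀ i : Fin n, ∀ t : ℝ, deriv (deriv (γ i)) t = (deriv (γ i) t) ^ 2 / γ i t) ∧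
    (∀ t : ℝ, ∑ i : Fin n, (deriv (γ i) t / γ i t) ^ 2
        = ∑ i : Fin n, (Real.log (τ₁ i / τ₀ i)) ^ 2) := by
  have hγ_exp : ∀ i, γ i = fun t => τ₀ i * exp (log (τ₁ i / τ₀ i) * t) := fun i => by
    subst hγ
    exact funext (rpow_one_sub_mul_rpow (hτ₀ i) (hτ₁ i))
  refine ⟨fun i => ?_, fun i t => ?_, fun i t => ?_, fun t => ?_⟩
  · simp [hγ]
  · rw [hγ_exp i, deriv_const_mul_exp_mul]
    constructor <;> fun_prop
  · rw [hγ_exp i]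
    exact deriv_deriv_const_mul_exp_mul (hτ₀ i).ne' _ _
  · refine Finset.sum_congr rfl fun i _ => ?_
    rw [hγ_exp i, ← logDeriv_apply, logDeriv_const_mul_exp_mul (hτ₀ i).ne']
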